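/- arXiv:2312.02386 — 2 statements merged into one kernel-verified Lean document; each statement's English description precedes it below -/
import Mathlib

section
/- With the Choi–Lu shape operators, the Gauss-equation curvature tensor R and the Weyl tensor C as in the context, C = 0 (as a (0,4)-tensor on V) if and only if μ = 0. (This is the pointwise form of: a Wintgen ideal submanifold of dimension n ≥ 4 in a real space form is conformally flat if and only if it is totally umbilical.) -/
noncomputable section

namespace Wintgen

/-- The standard inner product `g` on `ℝ^n`. -/
def gg (n : ℕ) (x y : Fin n → ℝ) : ℝ := ∑ i, x i * y i

/-- The standard orthonormal basis vectors `E_i` (0-indexed). -/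
def E (n : ℕ) (i : Fin n) : Fin n → ℝ := fun j => if j = i then 1 else 0

/-- Auxiliary: the `j`-th coordinate of `x` (0 if out of range). -/
def coord (n : ℕ) (x : Fin n → ℝ) (j : ℕ) : ℝ := if h : j < n then x ⟨j, h⟩ else 0

/-- The Choi–Lu shape operator `A_1`. -/
def A1 (n : ℕ) (a μ : ℝ) (x : Fin n → ℝ) : Fin n → ℝ := fun i =>
  if (i : ℕ) = 0 then a * x i + μ * coord n x 1
  else if (i : ℕ) = 1 then μ * coord n x 0 + a * x i
  else a * x i

/-- The Choi–Lu shape operator `A_2`. -/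
def A2 (n : ℕ) (b μ : ℝ) (x : Fin n → ℝ) : Fin n → ℝ := fun i =>
  if (i : ℕ) = 0 then (b + μ) * x i
  else if (i : ℕ) = 1 then (b - μ) * x i
  else b * x i

/-- The Choi–Lu shape operator `A_3 = c • id`. -/
def A3 (n : ℕ) (c : ℝ) (x : Fin n → ℝ) : Fin n → ℝ := fun i => c * x i

/-- The Gauss-equation curvature tensor `R`. -/
def Rt (n : ℕ) (a b c μ k : ℝ) (X Y Z W : Fin n → ℝ) : ℝ :=
  (gg n (A1 n a μ X) W * gg n (A1 n a μ Y) Z - gg n (A1 n a μ X) Z * gg n (A1 n a μ Y) W)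
  + (gg n (A2 n b μ X) W * gg n (A2 n b μ Y) Z - gg n (A2 n b μ X) Z * gg n (A2 n b μ Y) W)
  + (gg n (A3 n c X) W * gg n (A3 n c Y) Z - gg n (A3 n c X) Z * gg n (A3 n c Y) W)
  + k * (gg n X W * gg n Y Z - gg n X Z * gg n Y W)

/-- The Ricci tensor `Ricc(X,Y) = ∑ i, R(E_i, X, Y, E_i)`. -/
def Ricc (n : ℕ) (a b c μ k : ℝ) (X Y : Fin n → ℝ) : ℝ :=
  ∑ i, Rt n a b c μ k (E n i) X Y (E n i)

/-- The scalar curvature `τ`. -/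
def tau (n : ℕ) (a b c μ k : ℝ) : ℝ := ∑ i, Ricc n a b c μ k (E n i) (E n i)

/-- The Kulkarni–Nomizu product of two bilinear forms. -/
def KN (n : ℕ) (A B : (Fin n → ℝ) → (Fin n → ℝ) → ℝ) (X1 X2 X3 X4 : Fin n → ℝ) : ℝ :=
  A X1 X4 * B X2 X3 + A X2 X3 * B X1 X4 - A X1 X3 * B X2 X4 - A X2 X4 * B X1 X3

/-- The Weyl conformal curvature tensor `C`. -/
def Ct (n : ℕ) (a b c μ k : ℝ) (X Y Z W : Fin n → ℝ) : ℝ :=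
  Rt n a b c μ k X Y Z W
    - (1 / ((n : ℝ) - 2)) * KN n (gg n) (Ricc n a b c μ k) X Y Z W
    + (tau n a b c μ k / (2 * ((n : ℝ) - 1) * ((n : ℝ) - 2))) * KN n (gg n) (gg n) X Y Z W

/-- The endomorphism `(X ∧_A Y)` applied to `Z`. -/
def wedge (n : ℕ) (A : (Fin n → ℝ) → (Fin n → ℝ) → ℝ) (X Y Z : Fin n → ℝ) : Fin n → ℝ :=
  fun j => A Y Z * X j - A X Z * Y j

/-- The endomorphism determined by `g(Op(X,Y)Z, W) = T(X,Y,Z,W)`: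
its `j`-th component is `T(X,Y,Z,E_j)`. -/
def curvOp (n : ℕ) (T : (Fin n → ℝ) → (Fin n → ℝ) → (Fin n → ℝ) → (Fin n → ℝ) → ℝ)
    (X Y Z : Fin n → ℝ) : Fin n → ℝ := fun j => T X Y Z (E n j)

/-- Derivation-type action of a family of operators on a (0,4)-tensor. -/
def dotT (n : ℕ) (Op : (Fin n → ℝ) → (Fin n → ℝ) → (Fin n → ℝ) → (Fin n → ℝ))
    (T : (Fin n → ℝ) → (Fin n → ℝ) → (Fin n → ℝ) → (Fin n → ℝ) → ℝ)
    (X1 X2 X3 X4 X Y : Fin n → ℝ) : ℝ :=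
  - T (Op X Y X1) X2 X3 X4 - T X1 (Op X Y X2) X3 X4
  - T X1 X2 (Op X Y X3) X4 - T X1 X2 X3 (Op X Y X4)

/-- The (0,6)-tensor `R · C`. -/
def RC (n : ℕ) (a b c μ k : ℝ) :=
  dotT n (fun X Y => curvOp n (Rt n a b c μ k) X Y) (Ct n a b c μ k)

/-- The (0,6)-tensor `C · R`. -/
def CR (n : ℕ) (a b c μ k : ℝ) :=
  dotT n (fun X Y => curvOp n (Ct n a b c μ k) X Y) (Rt n a b c μ k)

/-- The Tachibana tensor `Q(A, T)`. -/
def Q (n : ℕ) (A : (Fin n → ℝ) → (Fin n → ℝ) → ℝ)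
    (T : (Fin n → ℝ) → (Fin n → ℝ) → (Fin n → ℝ) → (Fin n → ℝ) → ℝ) :=
  dotT n (fun X Y => wedge n A X Y) T

section Aux
variable {n : ℕ}

lemma gg_er (x : Fin n → ℝ) (j : Fin n) : gg n x (E n j) = x j := by
  simp [gg, E]

lemma gg_el (x : Fin n → ℝ) (j : Fin n) : gg n (E n j) x = x j := by
  simp [gg, E]

lemma coord_E (i : Fin n) (m : ℕ) (h : m < n) :
    coord n (E n i) m = if (i : ℕ) = m then 1 else 0 := by
  simp [coord, E, h, Fin.ext_iff, eq_comm]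

end Aux
section Aux2
variable {n : ℕ} {a b c μ k : ℝ}

/-- diagonal of A2 -/
def D (n : ℕ) (b μ : ℝ) (i : Fin n) : ℝ :=
  if (i : ℕ) = 0 then b + μ else if (i : ℕ) = 1 then b - μ else b

set_option maxHeartbeats 2000000 in
lemma Rt_EE (hn : 4 ≤ n) (i j : Fin n) :
    Rt n a b c μ k (E n i) (E n j) (E n j) (E n i) =
      (if i = j then 0 else (a^2 + c^2 + k) + D n b μ i * D n b μ j)
      - (if ((i:ℕ) = 0 ∧ (j:ℕ) = 1) ∨ ((i:ℕ) = 1 ∧ (j:ℕ) = 0) then μ^2 else 0) := by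
  have h0 : 0 < n := by omega
  have h1 : 1 < n := by omega
  simp only [Rt, gg_er, A1, A2, A3, D, coord_E _ _ h0, coord_E _ _ h1, E, Fin.ext_iff]
  split_ifs <;> first | (exfalso; omega) | ring

end Aux2
section Aux3
variable {n : ℕ} {a b c μ k : ℝ}

set_option maxHeartbeats 2000000 in
lemma RiccE (hn : 4 ≤ n) (j : Fin n) :
    Ricc n a b c μ k (E n j) (E n j) =
      ((n:ℝ) - 1) * (a^2 + b^2 + c^2 + k)
      + (if (j:ℕ) = 0 then ((n:ℝ) - 2) * b * μ - 2 * μ^2 else 0)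
      + (if (j:ℕ) = 1 then -(((n:ℝ) - 2) * b * μ) - 2 * μ^2 else 0) := by
  have h0 : 0 < n := by omega
  have h1 : 1 < n := by omega
  set i0 : Fin n := ⟨0, h0⟩ with hi0def
  set i1 : Fin n := ⟨1, h1⟩ with hi1def
  by_cases jc0 : (j:ℕ) = 0
  · have hpt : ∀ i : Fin n, Rt n a b c μ k (E n i) (E n j) (E n j) (E n i) =
        ((a^2 + c^2 + k) + (b^2 + b*μ))
        + (if i = i0 then -((a^2 + c^2 + k) + (b^2 + b*μ)) else 0)
        + (if i = i1 then -(b*μ) - 2*μ^2 else 0) := by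
      intro i
      rw [Rt_EE hn]
      simp only [D, Fin.ext_iff, hi0def, hi1def, jc0, and_false, false_and, and_true, true_and, or_false, false_or]
      split_ifs <;> first | (exfalso; omega) | (exfalso; tauto) | ring
    rw [Ricc, Finset.sum_congr rfl (fun i _ => hpt i)]
    simp [Finset.sum_add_distrib, Finset.sum_ite_eq', Finset.card_univ, jc0,
      show (j:ℕ) ≠ 1 by omega]
    ring
  · by_cases jc1 : (j:ℕ) = 1
    · have hpt : ∀ i : Fin n, Rt n a b c μ k (E n i) (E n j) (E n j) (E n i) =
          ((a^2 + c^2 + k) + (b^2 - b*μ))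
          + (if i = i1 then -((a^2 + c^2 + k) + (b^2 - b*μ)) else 0)
          + (if i = i0 then b*μ - 2*μ^2 else 0) := by
        intro i
        rw [Rt_EE hn]
        simp only [D, Fin.ext_iff, hi0def, hi1def, jc1, and_false, false_and, and_true, true_and, or_false, false_or]
        split_ifs <;> first | (exfalso; omega) | (exfalso; tauto) | ring
      rw [Ricc, Finset.sum_congr rfl (fun i _ => hpt i)]
      simp [Finset.sum_add_distrib, Finset.sum_ite_eq', Finset.card_univ, jc0, jc1]
      ring
    · have hpt : ∀ i : Fin n, Rt n a b c μ k (E n i) (E n j) (E n j) (E n i) =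
          ((a^2 + c^2 + k) + b^2)
          + (if i = j then -((a^2 + c^2 + k) + b^2) else 0)
          + (if i = i0 then b*μ else 0) + (if i = i1 then -(b*μ) else 0) := by
        intro i
        rw [Rt_EE hn]
        simp only [D, Fin.ext_iff, hi0def, hi1def]
        split_ifs <;> first | (exfalso; omega) | (exfalso; tauto) | ring
      rw [Ricc, Finset.sum_congr rfl (fun i _ => hpt i)]
      simp [Finset.sum_add_distrib, Finset.sum_ite_eq', Finset.card_univ, jc0, jc1]
      ring

end Aux3
section Aux4
variable {n : ℕ} {a b c μ k : ℝ}

lemma tauE (hn : 4 ≤ n) :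
    tau n a b c μ k = (n:ℝ) * ((n:ℝ) - 1) * (a^2 + b^2 + c^2 + k) - 4 * μ^2 := by
  have h0 : 0 < n := by omega
  have h1 : 1 < n := by omega
  rw [tau, Finset.sum_congr rfl (fun j _ => RiccE hn j)]
  have c0 : ∀ j : Fin n, ((j:ℕ) = 0) ↔ (j = ⟨0, h0⟩) := fun j => by simp [Fin.ext_iff]
  have c1 : ∀ j : Fin n, ((j:ℕ) = 1) ↔ (j = ⟨1, h1⟩) := fun j => by simp [Fin.ext_iff]
  simp only [c0, c1]
  simp [Finset.sum_add_distrib, Finset.sum_ite_eq', Finset.card_univ]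
  ring

end Aux4
section Aux5
variable {n : ℕ} {a b c μ k : ℝ}

lemma CtE23 (hn : 4 ≤ n) :
    Ct n a b c μ k (E n ⟨2, by omega⟩) (E n ⟨3, by omega⟩)
      (E n ⟨3, by omega⟩) (E n ⟨2, by omega⟩)
      = -4 * μ^2 / (((n:ℝ) - 1) * ((n:ℝ) - 2)) := by
  have h2 : 2 < n := by omega
  have h3 : 3 < n := by omega
  have e1 : ((n:ℝ) - 1) ≠ 0 := by
    have : (4:ℝ) ≤ (n:ℝ) := by exact_mod_cast hn
    intro hc; nlinarith
  have e2 : ((n:ℝ) - 2) ≠ 0 := by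
    have : (4:ℝ) ≤ (n:ℝ) := by exact_mod_cast hn
    intro hc; nlinarith
  rw [Ct, KN, KN, tauE hn, Rt_EE hn,
    RiccE hn (⟨2, h2⟩ : Fin n), RiccE hn (⟨3, h3⟩ : Fin n)]
  simp only [D, gg_er, E, Fin.ext_iff]
  norm_num
  field_simp
  ring

end Aux5
section Aux6
variable {n : ℕ} {a b c k : ℝ}

lemma gg_smul (t : ℝ) (x y : Fin n → ℝ) :
    gg n (fun i => t * x i) y = t * gg n x y := by
  simp [gg, Finset.mul_sum, mul_assoc]

lemma A1_zero (x : Fin n → ℝ) : A1 n a 0 x = fun i => a * x i := by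
  funext i
  simp only [A1]
  split_ifs <;> ring

lemma A2_zero (x : Fin n → ℝ) : A2 n b 0 x = fun i => b * x i := by
  funext i
  simp only [A2]
  split_ifs <;> ring

lemma Rt_zero (X Y Z W : Fin n → ℝ) :
    Rt n a b c 0 k X Y Z W =
      (a^2 + b^2 + c^2 + k) * (gg n X W * gg n Y Z - gg n X Z * gg n Y W) := by
  have hA3 : ∀ (x y : Fin n → ℝ), gg n (A3 n c x) y = c * gg n x y :=
    fun x y => gg_smul c x y
  rw [Rt, A1_zero, A1_zero, A2_zero, A2_zero]
  simp only [hA3, gg_smul]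
  ring

lemma Ricc_zero (X Y : Fin n → ℝ) :
    Ricc n a b c 0 k X Y = ((n:ℝ) - 1) * (a^2 + b^2 + c^2 + k) * gg n X Y := by
  rw [Ricc]
  have hpt : ∀ i : Fin n, Rt n a b c 0 k (E n i) X Y (E n i) =
      (a^2 + b^2 + c^2 + k) * gg n X Y - (a^2 + b^2 + c^2 + k) * (Y i * X i) := by
    intro i
    rw [Rt_zero]
    simp only [gg_er, gg_el, E]
    simp
    ring
  rw [Finset.sum_congr rfl (fun i _ => hpt i)]
  rw [Finset.sum_sub_distrib, Finset.sum_const, Finset.card_univ, Fintype.card_fin]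
  have : ∑ i : Fin n, (a^2 + b^2 + c^2 + k) * (Y i * X i)
      = (a^2 + b^2 + c^2 + k) * gg n Y X := by
    rw [gg, Finset.mul_sum]
  rw [this]
  have hsym : gg n Y X = gg n X Y := by
    simp [gg, mul_comm]
  rw [hsym, nsmul_eq_mul]
  ring

lemma tau_zero : tau n a b c 0 k = (n:ℝ) * ((n:ℝ) - 1) * (a^2 + b^2 + c^2 + k) := by
  rw [tau]
  have hpt : ∀ i : Fin n, Ricc n a b c 0 k (E n i) (E n i)
      = ((n:ℝ) - 1) * (a^2 + b^2 + c^2 + k) := by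
    intro i
    rw [Ricc_zero]
    simp [gg_er, E]
  rw [Finset.sum_congr rfl (fun i _ => hpt i), Finset.sum_const, Finset.card_univ,
    Fintype.card_fin, nsmul_eq_mul]
  ring

lemma Ct_zero (hn : 4 ≤ n) (X Y Z W : Fin n → ℝ) : Ct n a b c 0 k X Y Z W = 0 := by
  have e1 : ((n:ℝ) - 1) ≠ 0 := by
    have : (4:ℝ) ≤ (n:ℝ) := by exact_mod_cast hn
    intro hc; nlinarith
  have e2 : ((n:ℝ) - 2) ≠ 0 := by
    have : (4:ℝ) ≤ (n:ℝ) := by exact_mod_cast hn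
    intro hc; nlinarith
  rw [Ct, KN, KN, tau_zero, Rt_zero, Ricc_zero, Ricc_zero, Ricc_zero, Ricc_zero]
  field_simp
  ring

end Aux6
/-- `C = 0` iff `μ = 0` (conformal flatness ↔ total umbilicity). -/
theorem statement_3 (n : ℕ) (hn : 4 ≤ n) (a b c μ k : ℝ) :
    (∀ X Y Z W : Fin n → ℝ, Ct n a b c μ k X Y Z W = 0) ↔ μ = 0 := by
  constructor
  · intro h
    have hC := h (E n ⟨2, by omega⟩) (E n ⟨3, by omega⟩) (E n ⟨3, by omega⟩) (E n ⟨2, by omega⟩)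
    rw [CtE23 hn] at hC
    have e1 : ((n:ℝ) - 1) ≠ 0 := by
      have : (4:ℝ) ≤ (n:ℝ) := by exact_mod_cast hn
      intro hc; nlinarith
    have e2 : ((n:ℝ) - 2) ≠ 0 := by
      have : (4:ℝ) ≤ (n:ℝ) := by exact_mod_cast hn
      intro hc; nlinarith
    rcases div_eq_zero_iff.mp hC with h4 | h4
    · have hsq : μ^2 = 0 := by linarith
      exact pow_eq_zero_iff (by norm_num) |>.mp hsq
    · exact absurd h4 (mul_ne_zero e1 e2)
  · rintro rfl X Y Z W
    exact Ct_zero hn X Y Z W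
end Wintgen
end
end

section
/- With notation as in the context, the (0,6)-tensor C·R vanishes identically if and only if μ = 0. (This is the pointwise algebraic form of: a Wintgen ideal submanifold satisfies C·R = 0 iff it is totally umbilical, and hence conformally flat.) -/
noncomputable section

namespace Wintgen

section AuxLemmas

lemma gg_E_right {n : ℕ} (x : Fin n → ℝ) (m : Fin n) : gg n x (E n m) = x m := by
  simp [gg, E, mul_ite, mul_one, mul_zero]

lemma gg_E_left {n : ℕ} (x : Fin n → ℝ) (m : Fin n) : gg n (E n m) x = x m := by
  simp [gg, E, ite_mul, one_mul, zero_mul]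

lemma sum_split3 {n : ℕ} (i0 i1 i2 : Fin n) (h01 : i0 ≠ i1) (h02 : i0 ≠ i2) (h12 : i1 ≠ i2)
    (f g : Fin n → ℝ) (hfg : ∀ i, i ≠ i0 → i ≠ i1 → i ≠ i2 → f i = g i) :
    ∑ i, f i = ∑ i, g i + (f i0 - g i0) + (f i1 - g i1) + (f i2 - g i2) := by
  classical
  have key : ∀ i : Fin n, f i = g i + ((if i = i0 then f i0 - g i0 else 0)
      + (if i = i1 then f i1 - g i1 else 0) + (if i = i2 then f i2 - g i2 else 0)) := by
    intro i
    by_cases h0 : i = i0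
    · subst h0; simp [h01, h02]
    · by_cases h1 : i = i1
      · subst h1; simp [h12, Ne.symm h01]
      · by_cases h2 : i = i2
        · subst h2; simp [Ne.symm h02, Ne.symm h12]
        · simp [h0, h1, h2, hfg i h0 h1 h2]
  rw [Finset.sum_congr rfl (fun i _ => key i)]
  rw [Finset.sum_add_distrib, Finset.sum_add_distrib, Finset.sum_add_distrib]
  simp [Finset.sum_ite_eq']
  ring

variable {n : ℕ}

lemma coord_val (hn : 4 ≤ n) (x : Fin n → ℝ) (m : ℕ) (hm : m < 4) :
    coord n x m = x ⟨m, by omega⟩ := by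
  have : m < n := by omega
  simp [coord, this]

lemma gg_A1 (hn : 4 ≤ n) (a μ : ℝ) (x y : Fin n → ℝ) :
    gg n (A1 n a μ x) y = a * gg n x y
      + μ * (coord n x 0 * coord n y 1 + coord n x 1 * coord n y 0) := by
  have h0 : (0:ℕ) < n := by omega
  have h1 : (1:ℕ) < n := by omega
  unfold gg
  rw [sum_split3 (⟨0, by omega⟩ : Fin n) ⟨1, by omega⟩ ⟨2, by omega⟩
    (by simp) (by simp) (by simp)
    (fun i => A1 n a μ x i * y i) (fun i => a * (x i * y i)) ?_]
  · rw [← Finset.mul_sum]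
    simp [A1, coord, h0, h1, Fin.ext_iff]
    ring
  · intro i hi0 hi1 _
    have v0 : (i:ℕ) ≠ 0 := by simpa [Fin.ext_iff] using hi0
    have v1 : (i:ℕ) ≠ 1 := by simpa [Fin.ext_iff] using hi1
    simp [A1, v0, v1]; ring

lemma gg_A2 (hn : 4 ≤ n) (b μ : ℝ) (x y : Fin n → ℝ) :
    gg n (A2 n b μ x) y = b * gg n x y
      + μ * (coord n x 0 * coord n y 0 - coord n x 1 * coord n y 1) := by
  have h0 : (0:ℕ) < n := by omega
  have h1 : (1:ℕ) < n := by omega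
  unfold gg
  rw [sum_split3 (⟨0, by omega⟩ : Fin n) ⟨1, by omega⟩ ⟨2, by omega⟩
    (by simp) (by simp) (by simp)
    (fun i => A2 n b μ x i * y i) (fun i => b * (x i * y i)) ?_]
  · rw [← Finset.mul_sum]
    simp [A2, coord, h0, h1]
    ring
  · intro i hi0 hi1 _
    have v0 : (i:ℕ) ≠ 0 := by simpa [Fin.ext_iff] using hi0
    have v1 : (i:ℕ) ≠ 1 := by simpa [Fin.ext_iff] using hi1
    simp [A2, v0, v1]; ring

lemma gg_A3 (c : ℝ) (x y : Fin n → ℝ) :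
    gg n (A3 n c x) y = c * gg n x y := by
  unfold gg A3
  rw [Finset.mul_sum]
  exact Finset.sum_congr rfl (fun i _ => by ring)


lemma Ricc00 (hn : 4 ≤ n) (a b c μ k : ℝ) :
    Ricc n a b c μ k (E n ⟨0, by omega⟩) (E n ⟨0, by omega⟩) = ((n:ℝ)-1)*(a^2+b^2+c^2+k) + ((n:ℝ)-2)*b*μ - 2*μ^2 := by
  unfold Ricc
  rw [sum_split3 (⟨0, by omega⟩ : Fin n) ⟨1, by omega⟩ ⟨2, by omega⟩
    (by simp) (by simp) (by simp) _ (fun _ => a*a + b*(b+μ) + c*c + k) ?_]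
  · simp [Rt, gg_A1 hn, gg_A2 hn, gg_A3, A1, A2, A3, gg_E_right, gg_E_left, coord, E,
      (by omega : (0:ℕ) < n), (by omega : (1:ℕ) < n), (by omega : (2:ℕ) < n), Fin.ext_iff]
    try push_cast
    try ring
  · intro i h0 h1 h2
    have v0 : (i:ℕ) ≠ 0 := by simpa [Fin.ext_iff] using h0
    have v1 : (i:ℕ) ≠ 1 := by simpa [Fin.ext_iff] using h1
    have v2 : (i:ℕ) ≠ 2 := by simpa [Fin.ext_iff] using h2
    simp [Rt, gg_A1 hn, gg_A2 hn, gg_A3, A1, A2, A3, gg_E_right, gg_E_left, coord, E,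
      (by omega : (0:ℕ) < n), (by omega : (1:ℕ) < n), (by omega : (2:ℕ) < n), Fin.ext_iff, v0, v1, v2, Ne.symm v0, Ne.symm v1, Ne.symm v2]
    try ring
    try tauto

lemma Ricc11 (hn : 4 ≤ n) (a b c μ k : ℝ) :
    Ricc n a b c μ k (E n ⟨1, by omega⟩) (E n ⟨1, by omega⟩) = ((n:ℝ)-1)*(a^2+b^2+c^2+k) - ((n:ℝ)-2)*b*μ - 2*μ^2 := by
  unfold Ricc
  rw [sum_split3 (⟨0, by omega⟩ : Fin n) ⟨1, by omega⟩ ⟨2, by omega⟩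
    (by simp) (by simp) (by simp) _ (fun _ => a*a + b*(b-μ) + c*c + k) ?_]
  · simp [Rt, gg_A1 hn, gg_A2 hn, gg_A3, A1, A2, A3, gg_E_right, gg_E_left, coord, E,
      (by omega : (0:ℕ) < n), (by omega : (1:ℕ) < n), (by omega : (2:ℕ) < n), Fin.ext_iff]
    try push_cast
    try ring
  · intro i h0 h1 h2
    have v0 : (i:ℕ) ≠ 0 := by simpa [Fin.ext_iff] using h0
    have v1 : (i:ℕ) ≠ 1 := by simpa [Fin.ext_iff] using h1
    have v2 : (i:ℕ) ≠ 2 := by simpa [Fin.ext_iff] using h2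
    simp [Rt, gg_A1 hn, gg_A2 hn, gg_A3, A1, A2, A3, gg_E_right, gg_E_left, coord, E,
      (by omega : (0:ℕ) < n), (by omega : (1:ℕ) < n), (by omega : (2:ℕ) < n), Fin.ext_iff, v0, v1, v2, Ne.symm v0, Ne.symm v1, Ne.symm v2]
    try ring
    try tauto

lemma Ricc22 (hn : 4 ≤ n) (a b c μ k : ℝ) :
    Ricc n a b c μ k (E n ⟨2, by omega⟩) (E n ⟨2, by omega⟩) = ((n:ℝ)-1)*(a^2+b^2+c^2+k) := by
  unfold Ricc
  rw [sum_split3 (⟨0, by omega⟩ : Fin n) ⟨1, by omega⟩ ⟨2, by omega⟩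
    (by simp) (by simp) (by simp) _ (fun _ => a*a + b*b + c*c + k) ?_]
  · simp [Rt, gg_A1 hn, gg_A2 hn, gg_A3, A1, A2, A3, gg_E_right, gg_E_left, coord, E,
      (by omega : (0:ℕ) < n), (by omega : (1:ℕ) < n), (by omega : (2:ℕ) < n), Fin.ext_iff]
    try push_cast
    try ring
  · intro i h0 h1 h2
    have v0 : (i:ℕ) ≠ 0 := by simpa [Fin.ext_iff] using h0
    have v1 : (i:ℕ) ≠ 1 := by simpa [Fin.ext_iff] using h1
    have v2 : (i:ℕ) ≠ 2 := by simpa [Fin.ext_iff] using h2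
    simp [Rt, gg_A1 hn, gg_A2 hn, gg_A3, A1, A2, A3, gg_E_right, gg_E_left, coord, E,
      (by omega : (0:ℕ) < n), (by omega : (1:ℕ) < n), (by omega : (2:ℕ) < n), Fin.ext_iff, v0, v1, v2, Ne.symm v0, Ne.symm v1, Ne.symm v2]
    try ring
    try tauto

lemma Ricc01 (hn : 4 ≤ n) (a b c μ k : ℝ) :
    Ricc n a b c μ k (E n ⟨0, by omega⟩) (E n ⟨1, by omega⟩) = ((n:ℝ)-2)*a*μ := by
  unfold Ricc
  rw [sum_split3 (⟨0, by omega⟩ : Fin n) ⟨1, by omega⟩ ⟨2, by omega⟩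
    (by simp) (by simp) (by simp) _ (fun _ => a*μ) ?_]
  · simp [Rt, gg_A1 hn, gg_A2 hn, gg_A3, A1, A2, A3, gg_E_right, gg_E_left, coord, E,
      (by omega : (0:ℕ) < n), (by omega : (1:ℕ) < n), (by omega : (2:ℕ) < n), Fin.ext_iff]
    try push_cast
    try ring
  · intro i h0 h1 h2
    have v0 : (i:ℕ) ≠ 0 := by simpa [Fin.ext_iff] using h0
    have v1 : (i:ℕ) ≠ 1 := by simpa [Fin.ext_iff] using h1
    have v2 : (i:ℕ) ≠ 2 := by simpa [Fin.ext_iff] using h2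
    simp [Rt, gg_A1 hn, gg_A2 hn, gg_A3, A1, A2, A3, gg_E_right, gg_E_left, coord, E,
      (by omega : (0:ℕ) < n), (by omega : (1:ℕ) < n), (by omega : (2:ℕ) < n), Fin.ext_iff, v0, v1, v2, Ne.symm v0, Ne.symm v1, Ne.symm v2]
    try ring
    try tauto

lemma Ricc10 (hn : 4 ≤ n) (a b c μ k : ℝ) :
    Ricc n a b c μ k (E n ⟨1, by omega⟩) (E n ⟨0, by omega⟩) = ((n:ℝ)-2)*a*μ := by
  unfold Ricc
  rw [sum_split3 (⟨0, by omega⟩ : Fin n) ⟨1, by omega⟩ ⟨2, by omega⟩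
    (by simp) (by simp) (by simp) _ (fun _ => a*μ) ?_]
  · simp [Rt, gg_A1 hn, gg_A2 hn, gg_A3, A1, A2, A3, gg_E_right, gg_E_left, coord, E,
      (by omega : (0:ℕ) < n), (by omega : (1:ℕ) < n), (by omega : (2:ℕ) < n), Fin.ext_iff]
    try push_cast
    try ring
  · intro i h0 h1 h2
    have v0 : (i:ℕ) ≠ 0 := by simpa [Fin.ext_iff] using h0
    have v1 : (i:ℕ) ≠ 1 := by simpa [Fin.ext_iff] using h1
    have v2 : (i:ℕ) ≠ 2 := by simpa [Fin.ext_iff] using h2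
    simp [Rt, gg_A1 hn, gg_A2 hn, gg_A3, A1, A2, A3, gg_E_right, gg_E_left, coord, E,
      (by omega : (0:ℕ) < n), (by omega : (1:ℕ) < n), (by omega : (2:ℕ) < n), Fin.ext_iff, v0, v1, v2, Ne.symm v0, Ne.symm v1, Ne.symm v2]
    try ring
    try tauto

lemma Ricc02 (hn : 4 ≤ n) (a b c μ k : ℝ) :
    Ricc n a b c μ k (E n ⟨0, by omega⟩) (E n ⟨2, by omega⟩) = (0:ℝ) := by
  unfold Ricc
  rw [sum_split3 (⟨0, by omega⟩ : Fin n) ⟨1, by omega⟩ ⟨2, by omega⟩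
    (by simp) (by simp) (by simp) _ (fun _ => (0:ℝ)) ?_]
  · simp [Rt, gg_A1 hn, gg_A2 hn, gg_A3, A1, A2, A3, gg_E_right, gg_E_left, coord, E,
      (by omega : (0:ℕ) < n), (by omega : (1:ℕ) < n), (by omega : (2:ℕ) < n), Fin.ext_iff]
    try push_cast
    try ring
  · intro i h0 h1 h2
    have v0 : (i:ℕ) ≠ 0 := by simpa [Fin.ext_iff] using h0
    have v1 : (i:ℕ) ≠ 1 := by simpa [Fin.ext_iff] using h1
    have v2 : (i:ℕ) ≠ 2 := by simpa [Fin.ext_iff] using h2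
    simp [Rt, gg_A1 hn, gg_A2 hn, gg_A3, A1, A2, A3, gg_E_right, gg_E_left, coord, E,
      (by omega : (0:ℕ) < n), (by omega : (1:ℕ) < n), (by omega : (2:ℕ) < n), Fin.ext_iff, v0, v1, v2, Ne.symm v0, Ne.symm v1, Ne.symm v2]
    try ring
    try tauto

lemma Ricc20 (hn : 4 ≤ n) (a b c μ k : ℝ) :
    Ricc n a b c μ k (E n ⟨2, by omega⟩) (E n ⟨0, by omega⟩) = (0:ℝ) := by
  unfold Ricc
  rw [sum_split3 (⟨0, by omega⟩ : Fin n) ⟨1, by omega⟩ ⟨2, by omega⟩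
    (by simp) (by simp) (by simp) _ (fun _ => (0:ℝ)) ?_]
  · simp [Rt, gg_A1 hn, gg_A2 hn, gg_A3, A1, A2, A3, gg_E_right, gg_E_left, coord, E,
      (by omega : (0:ℕ) < n), (by omega : (1:ℕ) < n), (by omega : (2:ℕ) < n), Fin.ext_iff]
    try push_cast
    try ring
  · intro i h0 h1 h2
    have v0 : (i:ℕ) ≠ 0 := by simpa [Fin.ext_iff] using h0
    have v1 : (i:ℕ) ≠ 1 := by simpa [Fin.ext_iff] using h1
    have v2 : (i:ℕ) ≠ 2 := by simpa [Fin.ext_iff] using h2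
    simp [Rt, gg_A1 hn, gg_A2 hn, gg_A3, A1, A2, A3, gg_E_right, gg_E_left, coord, E,
      (by omega : (0:ℕ) < n), (by omega : (1:ℕ) < n), (by omega : (2:ℕ) < n), Fin.ext_iff, v0, v1, v2, Ne.symm v0, Ne.symm v1, Ne.symm v2]
    try ring
    try tauto

lemma Ricc12 (hn : 4 ≤ n) (a b c μ k : ℝ) :
    Ricc n a b c μ k (E n ⟨1, by omega⟩) (E n ⟨2, by omega⟩) = (0:ℝ) := by
  unfold Ricc
  rw [sum_split3 (⟨0, by omega⟩ : Fin n) ⟨1, by omega⟩ ⟨2, by omega⟩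
    (by simp) (by simp) (by simp) _ (fun _ => (0:ℝ)) ?_]
  · simp [Rt, gg_A1 hn, gg_A2 hn, gg_A3, A1, A2, A3, gg_E_right, gg_E_left, coord, E,
      (by omega : (0:ℕ) < n), (by omega : (1:ℕ) < n), (by omega : (2:ℕ) < n), Fin.ext_iff]
    try push_cast
    try ring
  · intro i h0 h1 h2
    have v0 : (i:ℕ) ≠ 0 := by simpa [Fin.ext_iff] using h0
    have v1 : (i:ℕ) ≠ 1 := by simpa [Fin.ext_iff] using h1
    have v2 : (i:ℕ) ≠ 2 := by simpa [Fin.ext_iff] using h2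
    simp [Rt, gg_A1 hn, gg_A2 hn, gg_A3, A1, A2, A3, gg_E_right, gg_E_left, coord, E,
      (by omega : (0:ℕ) < n), (by omega : (1:ℕ) < n), (by omega : (2:ℕ) < n), Fin.ext_iff, v0, v1, v2, Ne.symm v0, Ne.symm v1, Ne.symm v2]
    try ring
    try tauto

lemma Ricc21 (hn : 4 ≤ n) (a b c μ k : ℝ) :
    Ricc n a b c μ k (E n ⟨2, by omega⟩) (E n ⟨1, by omega⟩) = (0:ℝ) := by
  unfold Ricc
  rw [sum_split3 (⟨0, by omega⟩ : Fin n) ⟨1, by omega⟩ ⟨2, by omega⟩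
    (by simp) (by simp) (by simp) _ (fun _ => (0:ℝ)) ?_]
  · simp [Rt, gg_A1 hn, gg_A2 hn, gg_A3, A1, A2, A3, gg_E_right, gg_E_left, coord, E,
      (by omega : (0:ℕ) < n), (by omega : (1:ℕ) < n), (by omega : (2:ℕ) < n), Fin.ext_iff]
    try push_cast
    try ring
  · intro i h0 h1 h2
    have v0 : (i:ℕ) ≠ 0 := by simpa [Fin.ext_iff] using h0
    have v1 : (i:ℕ) ≠ 1 := by simpa [Fin.ext_iff] using h1
    have v2 : (i:ℕ) ≠ 2 := by simpa [Fin.ext_iff] using h2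
    simp [Rt, gg_A1 hn, gg_A2 hn, gg_A3, A1, A2, A3, gg_E_right, gg_E_left, coord, E,
      (by omega : (0:ℕ) < n), (by omega : (1:ℕ) < n), (by omega : (2:ℕ) < n), Fin.ext_iff, v0, v1, v2, Ne.symm v0, Ne.symm v1, Ne.symm v2]
    try ring
    try tauto

lemma RiccGeneric (hn : 4 ≤ n) (a b c μ k : ℝ) (i : Fin n) (hi : 2 ≤ (i:ℕ)) :
    Ricc n a b c μ k (E n i) (E n i) = ((n:ℝ)-1)*(a^2+b^2+c^2+k) := by
  have w0 : (i:ℕ) ≠ 0 := by omega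
  have w1 : (i:ℕ) ≠ 1 := by omega
  unfold Ricc
  rw [sum_split3 (⟨0, by omega⟩ : Fin n) ⟨1, by omega⟩ i
    (by simp [Fin.ext_iff]; try omega) (by simp [Fin.ext_iff]; try omega) (by simp [Fin.ext_iff]; try omega)
    _ (fun _ => a*a + b*b + c*c + k) ?_]
  · simp [Rt, gg_A1 hn, gg_A2 hn, gg_A3, A1, A2, A3, gg_E_right, gg_E_left, coord, E,
      (by omega : (0:ℕ) < n), (by omega : (1:ℕ) < n), Fin.ext_iff,
      w0, w1, Ne.symm w0, Ne.symm w1]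
    push_cast
    ring
  · intro l h0 h1 h2
    have v0 : (l:ℕ) ≠ 0 := by simpa [Fin.ext_iff] using h0
    have v1 : (l:ℕ) ≠ 1 := by simpa [Fin.ext_iff] using h1
    have v2 : l ≠ i := h2
    have v2' : (l:ℕ) ≠ (i:ℕ) := by simpa [Fin.ext_iff] using h2
    simp [Rt, gg_A1 hn, gg_A2 hn, gg_A3, A1, A2, A3, gg_E_right, gg_E_left, coord, E,
      (by omega : (0:ℕ) < n), (by omega : (1:ℕ) < n), Fin.ext_iff,
      v0, v1, Ne.symm v0, Ne.symm v1, v2', Ne.symm v2', w0, w1, Ne.symm w0, Ne.symm w1]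
    try ring

lemma tauVal (hn : 4 ≤ n) (a b c μ k : ℝ) :
    tau n a b c μ k = (n:ℝ)*((n:ℝ)-1)*(a^2+b^2+c^2+k) - 4*μ^2 := by
  unfold tau
  rw [sum_split3 (⟨0, by omega⟩ : Fin n) ⟨1, by omega⟩ ⟨2, by omega⟩
    (by simp) (by simp) (by simp) _ (fun _ => ((n:ℝ)-1)*(a^2+b^2+c^2+k)) ?_]
  · rw [Ricc00 hn, Ricc11 hn, Ricc22 hn]
    simp [Finset.sum_const, Finset.card_univ]
    push_cast
    ring
  · intro i h0 h1 h2
    have : 2 ≤ (i:ℕ) := by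
      have v0 : (i:ℕ) ≠ 0 := by simpa [Fin.ext_iff] using h0
      have v1 : (i:ℕ) ≠ 1 := by simpa [Fin.ext_iff] using h1
      omega
    rw [RiccGeneric hn a b c μ k i this]

end AuxLemmas

lemma Rt_mu0 {n : ℕ} (hn : 4 ≤ n) (a b c k : ℝ) (X Y Z W : Fin n → ℝ) :
    Rt n a b c 0 k X Y Z W
      = (a^2+b^2+c^2+k) * (gg n X W * gg n Y Z - gg n X Z * gg n Y W) := by
  simp [Rt, gg_A1 hn, gg_A2 hn, gg_A3]
  ring

lemma Ricc_mu0 {n : ℕ} (hn : 4 ≤ n) (a b c k : ℝ) (X Y : Fin n → ℝ) :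
    Ricc n a b c 0 k X Y = ((n:ℝ)-1)*(a^2+b^2+c^2+k) * gg n X Y := by
  unfold Ricc
  have key : ∀ i : Fin n, Rt n a b c 0 k (E n i) X Y (E n i)
      = (a^2+b^2+c^2+k) * gg n X Y - (a^2+b^2+c^2+k) * (X i * Y i) := by
    intro i
    rw [Rt_mu0 hn]
    rw [gg_E_right, gg_E_left, gg_E_right]
    simp [E]
    ring
  rw [Finset.sum_congr rfl (fun i _ => key i)]
  rw [Finset.sum_sub_distrib, Finset.sum_const, ← Finset.mul_sum]
  have hgg : ∑ i, X i * Y i = gg n X Y := rfl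
  rw [hgg]
  simp [Finset.card_univ]
  ring

lemma Ct_mu0 {n : ℕ} (hn : 4 ≤ n) (a b c k : ℝ) (X Y Z W : Fin n → ℝ) :
    Ct n a b c 0 k X Y Z W = 0 := by
  have hN : (4:ℝ) ≤ (n:ℝ) := by exact_mod_cast hn
  have h2 : ((n:ℝ)-2) ≠ 0 := by intro h; nlinarith
  have h1 : ((n:ℝ)-1) ≠ 0 := by intro h; nlinarith
  unfold Ct KN
  rw [Rt_mu0 hn, Ricc_mu0 hn, Ricc_mu0 hn, Ricc_mu0 hn, Ricc_mu0 hn, tauVal hn]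
  field_simp
  ring

set_option maxHeartbeats 2000000 in
/-- `C · R = 0` iff `μ = 0`. -/
theorem statement_5 (n : ℕ) (hn : 4 ≤ n) (a b c μ k : ℝ) :
    (∀ X1 X2 X3 X4 X Y : Fin n → ℝ, CR n a b c μ k X1 X2 X3 X4 X Y = 0) ↔ μ = 0 := by
  constructor
  · intro H
    have hN : (4:ℝ) ≤ (n:ℝ) := by exact_mod_cast hn
    have hd2 : ((n:ℝ)-2) ≠ 0 := by intro h; nlinarith
    have hd1 : ((n:ℝ)-1) ≠ 0 := by intro h; nlinarith
    have h1 := H (E n ⟨0, by omega⟩) (E n ⟨1, by omega⟩) (E n ⟨0, by omega⟩) (E n ⟨2, by omega⟩)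
      (E n ⟨1, by omega⟩) (E n ⟨2, by omega⟩)
    simp only [CR, dotT, curvOp, Ct, KN, Rt, gg_A1 hn, gg_A2 hn, gg_A3,
      gg_E_right, gg_E_left, Ricc00 hn, Ricc11 hn, Ricc22 hn, Ricc01 hn, Ricc10 hn,
      Ricc02 hn, Ricc20 hn, Ricc12 hn, Ricc21 hn, tauVal hn, E, coord,
      A1, A2, A3, Fin.mk.injEq,
      (by omega : (0:ℕ) < n), (by omega : (1:ℕ) < n), (by omega : (2:ℕ) < n)] at h1
    norm_num at h1
    have h2 := H (E n ⟨0, by omega⟩) (E n ⟨1, by omega⟩) (E n ⟨1, by omega⟩) (E n ⟨2, by omega⟩)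
      (E n ⟨0, by omega⟩) (E n ⟨2, by omega⟩)
    simp only [CR, dotT, curvOp, Ct, KN, Rt, gg_A1 hn, gg_A2 hn, gg_A3,
      gg_E_right, gg_E_left, Ricc00 hn, Ricc11 hn, Ricc22 hn, Ricc01 hn, Ricc10 hn,
      Ricc02 hn, Ricc20 hn, Ricc12 hn, Ricc21 hn, tauVal hn, E, coord,
      A1, A2, A3, Fin.mk.injEq,
      (by omega : (0:ℕ) < n), (by omega : (1:ℕ) < n), (by omega : (2:ℕ) < n)] at h2
    norm_num at h2
    have key1 : μ^3*(2*μ+b)*((n:ℝ)-3) = 0 := by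
      linear_combination (norm := (field_simp; ring)) (-(((n:ℝ)-1)*((n:ℝ)-2))/2) * h1
    have key2 : μ^3*(2*μ-b)*((n:ℝ)-3) = 0 := by
      linear_combination (norm := (field_simp; ring)) ((((n:ℝ)-1)*((n:ℝ)-2))/2) * h2
    have h4 : μ^4 * (4*((n:ℝ)-3)) = 0 := by linear_combination key1 + key2
    have hn3 : (4*((n:ℝ)-3)) ≠ 0 := by intro h; nlinarith
    have h5 : μ^4 = 0 := by
      rcases mul_eq_zero.mp h4 with h | h
      · exact h
      · exact absurd h hn3
    exact pow_eq_zero_iff (by norm_num) |>.mp h5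
  · intro hμ X1 X2 X3 X4 X Y
    subst hμ
    have hz : ∀ X Y Z : Fin n → ℝ, curvOp n (Ct n a b c 0 k) X Y Z = (fun _ : Fin n => (0:ℝ)) := by
      intro X Y Z; funext j; simp [curvOp, Ct_mu0 hn]
    simp only [CR, dotT, hz]
    simp [Rt, gg, A1, A2, A3, coord]

end Wintgen
end
end
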